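/- Let G be a connected cubic simple graph with n vertices and m = 3n/2 edges, m even, and let M* be any perfect matching of the vertex-edge graph M(G). Then M* contains exactly n/4 edges whose two endpoints are both e-vertices (edges of G) and exactly n edges joining a v-vertex (vertex of G) to an e-vertex. Moreover, exactly n/4 of the n K4-subgraphs G_v of M(G) contain exactly two edges of M*, and the remaining 3n/4 of them contain exactly one edge of M*. -/

import Mathlib

variable {V : Type*}

/-- The vertex-edge graph (middle graph) of `G`: vertices are `V(G) ⊕ E(G)`;
two `e`-vertices are adjacent iff the corresponding edges of `G` are distinct and share
an endpoint; a `v`-vertex and an `e`-vertex are adjacent iff the vertex is an endpoint of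
the edge; no two `v`-vertices are adjacent. -/
def middleGraph (G : SimpleGraph V) : SimpleGraph (V ⊕ G.edgeSet) where
  Adj a b :=
    match a, b with
    | Sum.inl _, Sum.inl _ => False
    | Sum.inl u, Sum.inr e => u ∈ (e : Sym2 V)
    | Sum.inr e, Sum.inl u => u ∈ (e : Sym2 V)
    | Sum.inr e, Sum.inr f => e ≠ f ∧ ∃ v, v ∈ (e : Sym2 V) ∧ v ∈ (f : Sym2 V)
  symm := by
    refine ⟨?_⟩
    rintro (u | e) (v | f) h
    · exact h.elim
    · exact h
    · exact h
    · exact ⟨h.1.symm, h.2.imp fun v hv => ⟨hv.2, hv.1⟩⟩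
  loopless := by
    refine ⟨?_⟩
    rintro (u | e) h
    · exact h
    · exact h.1 rfl

/-- The line graph of `G`, with vertex set the edge set of `G`; two edges are adjacent
iff they are distinct and share an endpoint. -/
def lineGraph (G : SimpleGraph V) : SimpleGraph G.edgeSet where
  Adj e f := e ≠ f ∧ ∃ v, v ∈ (e : Sym2 V) ∧ v ∈ (f : Sym2 V)
  symm := ⟨fun e f h => ⟨h.1.symm, h.2.imp fun v hv => ⟨hv.2, hv.1⟩⟩⟩
  loopless := ⟨fun e h => h.1 rfl⟩

/-- `P` is a perfect matching (dimer covering) of `H`, viewed as a set of edges: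
all members are edges of `H`, distinct members share no vertex, and every vertex of `H`
lies in some member. -/
def IsPerfMatchSet {W : Type*} (H : SimpleGraph W) (P : Set (Sym2 W)) : Prop :=
  P ⊆ H.edgeSet ∧
  (∀ p ∈ P, ∀ q ∈ P, p ≠ q → ∀ a, a ∈ p → a ∉ q) ∧
  (∀ w : W, ∃ p ∈ P, w ∈ p)

/-- The number of perfect matchings (dimer coverings) of `H`. -/
noncomputable def pmCount {W : Type*} (H : SimpleGraph W) : ℕ :=
  {P : Set (Sym2 W) | IsPerfMatchSet H P}.ncard

/-- For a vertex `v` of `G`, the set of vertices of the middle graph `M(G)` consisting of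
the `v`-vertex `v` together with the `e`-vertices corresponding to the edges of `G`
incident with `v`.  For a cubic graph this induces a `K₄` in `M(G)`, denoted `G_v`. -/
def K4set (G : SimpleGraph V) (v : V) : Set (V ⊕ G.edgeSet) :=
  {a | a = Sum.inl v ∨ ∃ e : G.edgeSet, v ∈ (e : Sym2 V) ∧ a = Sum.inr e}

/-!
The `v`-vertices of `M(G)` are independent, so each is matched to an `e`-vertex and `P` has
exactly `n` edges of type `v`–`e`. Counting vertices, `2 |P| = n + m = 5n/2`, so the remaining
`|P| - n = n/4` edges of `P` join two `e`-vertices.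

Every edge of `M(G)` lies in exactly one `G_v` (an `e`–`e` edge in the `G_v` of the common
endpoint of the two edges), so `|P| = ∑ v, |P ∩ G_v|`. Each `G_v` contains the edge of `P` at `v`,
and at most two edges of `P` because it has four vertices; hence exactly `|P| - n = n/4` of the
`G_v` contain two edges of `P`.
-/

theorem Set.ncard_le_ncard_of_forall_subsingleton {α β : Type*} {s : Set α} {t : Set β}
    (ht : t.Finite) (r : α → β → Prop) (hst : ∀ a ∈ s, ∃ b ∈ t, r a b)
    (hts : ∀ b ∈ t, {a ∈ s | r a b}.Subsingleton) : s.ncard ≤ t.ncard := by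
  classical
  rcases s.finite_or_infinite with hs | hs
  · rw [ncard_eq_toFinset_card s hs, ncard_eq_toFinset_card t ht]
    exact Finset.card_le_card_of_forall_subsingleton r (by simpa using hst) (by simpa using hts)
  · simp [hs.ncard]

section PerfectMatching

variable {W : Type*} {H : SimpleGraph W} {P : Set (Sym2 W)}

theorem IsPerfMatchSet.eq_of_mem (hP : IsPerfMatchSet H P) {p q : Sym2 W} (hp : p ∈ P)
    (hq : q ∈ P) {w : W} (hwp : w ∈ p) (hwq : w ∈ q) : p = q := by
  by_contra hpq
  exact hP.2.1 p hp q hq hpq w hwp hwq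

theorem IsPerfMatchSet.two_mul_ncard [Finite W] (hP : IsPerfMatchSet H P) :
    2 * P.ncard = Nat.card W := by
  classical
  have := Fintype.ofFinite W
  rw [Set.ncard_eq_toFinset_card' P, Nat.card_eq_fintype_card, ← Finset.card_univ, mul_comm,
    ← mul_one (Finset.univ.card)]
  refine Finset.card_mul_eq_card_mul (fun p w => w ∈ p) (fun p hp => ?_) (fun w _ => ?_)
  · have hdiag := H.not_isDiag_of_mem_edgeSet (hP.1 (Set.mem_toFinset.mp hp))
    rw [← Sym2.card_toFinset_of_not_isDiag p hdiag]
    congr 1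
    ext w
    simp [Sym2.mem_toFinset]
  · obtain ⟨p, hp, hwp⟩ := hP.2.2 w
    rw [Finset.card_eq_one]
    refine ⟨p, ?_⟩
    ext q
    simp only [Finset.mem_bipartiteBelow, Set.mem_toFinset, Finset.mem_singleton]
    exact ⟨fun ⟨hq, hwq⟩ => hP.eq_of_mem hq hp hwq hwp, fun h => h ▸ ⟨hp, hwp⟩⟩

theorem two_mul_ncard_setOf_forall_mem_le [Finite W] (hH : P ⊆ H.edgeSet)
    (hdisj : P.Pairwise fun p q => ∀ a ∈ p, a ∉ q) (S : Set W) :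
    2 * {p ∈ P | ∀ a ∈ p, a ∈ S}.ncard ≤ S.ncard := by
  classical
  have := Fintype.ofFinite W
  set Q := {p ∈ P | ∀ a ∈ p, a ∈ S}
  rw [Set.ncard_eq_toFinset_card' Q, Set.ncard_eq_toFinset_card' S, mul_comm,
    ← mul_one S.toFinset.card]
  refine Finset.card_mul_le_card_mul (fun p w => w ∈ p) (fun p hp => ?_) (fun w _ => ?_)
  · obtain ⟨hpP, hpS⟩ := Set.mem_toFinset.mp hp
    have hdiag := H.not_isDiag_of_mem_edgeSet (hH hpP)
    rw [← Sym2.card_toFinset_of_not_isDiag p hdiag]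
    refine (Finset.card_le_card fun w hw => ?_).trans_eq rfl
    rw [Sym2.mem_toFinset] at hw
    simp [hw, hpS w hw]
  · refine Finset.card_le_one.mpr fun p hp q hq => ?_
    simp only [Finset.mem_bipartiteBelow, Set.mem_toFinset] at hp hq
    by_contra hpq
    exact hdisj hp.1.1 hq.1.1 hpq w hp.2 hq.2

theorem IsPerfMatchSet.ncard_setOf_exists_mem_of_isIndepSet [Finite W]
    (hP : IsPerfMatchSet H P) {S : Set W} (hS : H.IsIndepSet S) :
    {p ∈ P | ∃ w ∈ S, w ∈ p}.ncard = S.ncard := by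
  refine le_antisymm (Set.ncard_le_ncard_of_forall_subsingleton (Set.toFinite S)
    (fun p w => w ∈ p) (fun p hp => hp.2) fun w hw p hp q hq => ?_)
    (Set.ncard_le_ncard_of_forall_subsingleton (Set.toFinite _) (fun w p => w ∈ p)
      (fun w hw => ?_) fun p hp w hw w' hw' => ?_)
  · exact hP.eq_of_mem hp.1.1 hq.1.1 hp.2 hq.2
  · obtain ⟨p, hp, hwp⟩ := hP.2.2 w
    exact ⟨p, ⟨hp, w, hw, hwp⟩, hwp⟩
  · by_contra hne
    have hadj : H.Adj w w' := by
      rw [← SimpleGraph.mem_edgeSet, ← (Sym2.mem_and_mem_iff hne).mp ⟨hw.2, hw'.2⟩]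
      exact hP.1 hp.1
    exact hS hw.1 hw'.1 hne hadj

end PerfectMatching

section MiddleGraph

variable (G : SimpleGraph V)

theorem mem_edgeSet_middleGraph_iff {p : Sym2 (V ⊕ G.edgeSet)} :
    p ∈ (middleGraph G).edgeSet ↔
      (∃ (v : V) (e : G.edgeSet), v ∈ (e : Sym2 V) ∧ p = s(Sum.inl v, Sum.inr e)) ∨
      ∃ e f : G.edgeSet, (lineGraph G).Adj e f ∧ p = s(Sum.inr e, Sum.inr f) := by
  refine ⟨fun hp => ?_, ?_⟩
  · induction p using Sym2.ind with
    | _ a b =>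
      rcases a with u | e <;> rcases b with w | f
      · exact hp.elim
      · exact .inl ⟨u, f, hp, rfl⟩
      · exact .inl ⟨w, e, hp, Sym2.eq_swap⟩
      · exact .inr ⟨e, f, hp, rfl⟩
  · rintro (⟨v, e, h, rfl⟩ | ⟨e, f, h, rfl⟩) <;> exact h

theorem isIndepSet_range_inl_middleGraph :
    (middleGraph G).IsIndepSet (Set.range Sum.inl) := by
  rintro _ ⟨u, rfl⟩ _ ⟨w, rfl⟩ _ h
  exact h

theorem existsUnique_mem_of_lineGraph_adj {e f : G.edgeSet} (h : (lineGraph G).Adj e f) :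
    ∃! v, v ∈ (e : Sym2 V) ∧ v ∈ (f : Sym2 V) := by
  obtain ⟨hef, v, hv⟩ := h
  refine ⟨v, hv, fun w hw => ?_⟩
  by_contra hwv
  exact hef (Subtype.ext (by
    rw [(Sym2.mem_and_mem_iff hwv).mp ⟨hw.1, hv.1⟩, (Sym2.mem_and_mem_iff hwv).mp ⟨hw.2, hv.2⟩]))

variable {G}

@[simp]
theorem inl_mem_K4set_iff {u v : V} : (Sum.inl u : V ⊕ G.edgeSet) ∈ K4set G v ↔ u = v := by
  simp [K4set]

@[simp]
theorem inr_mem_K4set_iff {v : V} {e : G.edgeSet} :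
    (Sum.inr e : V ⊕ G.edgeSet) ∈ K4set G v ↔ v ∈ (e : Sym2 V) := by
  simp [K4set]

theorem existsUnique_forall_mem_K4set {p : Sym2 (V ⊕ G.edgeSet)}
    (hp : p ∈ (middleGraph G).edgeSet) : ∃! v, ∀ a ∈ p, a ∈ K4set G v := by
  rcases (mem_edgeSet_middleGraph_iff G).mp hp with ⟨v, e, hve, rfl⟩ | ⟨e, f, hef, rfl⟩
  · refine ⟨v, ?_, fun w hw => ?_⟩
    · simp [hve]
    · simpa [eq_comm] using hw (Sum.inl v) (Sym2.mem_mk_left _ _)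
  · simpa using existsUnique_mem_of_lineGraph_adj G hef

theorem ncard_K4set [Fintype V] [DecidableRel G.Adj] (v : V) :
    (K4set G v).ncard = G.degree v + 1 := by
  classical
  have hK : K4set G v = insert (Sum.inl v) (Sum.inr '' {e : G.edgeSet | v ∈ (e : Sym2 V)}) := by
    ext (u | e) <;> simp [eq_comm]
  have hinc : Subtype.val '' {e : G.edgeSet | v ∈ (e : Sym2 V)} = G.incidenceSet v := by
    ext x
    simp [SimpleGraph.incidenceSet, and_comm]
  rw [hK, Set.ncard_insert_of_notMem (by simp), Set.ncard_image_of_injective _ Sum.inr_injective,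
    ← Set.ncard_image_of_injective _ Subtype.val_injective, hinc, Set.ncard_eq_toFinset_card',
    Set.toFinset_card, SimpleGraph.card_incidenceSet_eq_degree]

end MiddleGraph

theorem SimpleGraph.IsRegularOfDegree.two_mul_card_edgeSet {G : SimpleGraph V} [Fintype V]
    [DecidableRel G.Adj] {d : ℕ} (hG : G.IsRegularOfDegree d) :
    2 * Nat.card G.edgeSet = d * Fintype.card V := by
  classical
  rw [Nat.card_eq_fintype_card, ← G.edgeFinset_card, ← G.sum_degrees_eq_twice_card_edges,
    Finset.sum_congr rfl fun v _ => hG.degree_eq v, Finset.sum_const, Finset.card_univ,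
    smul_eq_mul, mul_comm]

section OneOrTwo

variable {ι : Type*} [Fintype ι] {f : ι → ℕ}

theorem ncard_setOf_eq_one_add_ncard_setOf_eq_two (hf : ∀ i, f i = 1 ∨ f i = 2) :
    {i | f i = 1}.ncard + {i | f i = 2}.ncard = Fintype.card ι := by
  have hcompl : {i | f i = 2} = {i | f i = 1}ᶜ := by
    ext i
    rcases hf i with h | h <;> simp [h]
  rw [hcompl, Set.ncard_add_ncard_compl, Nat.card_eq_fintype_card]

theorem sum_eq_ncard_setOf_eq_one_add_two_mul (hf : ∀ i, f i = 1 ∨ f i = 2) :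
    ∑ i, f i = {i | f i = 1}.ncard + 2 * {i | f i = 2}.ncard := by
  classical
  have hsplit : ∀ i, f i = (if f i = 1 then 1 else 0) + 2 * (if f i = 2 then 1 else 0) := by
    intro i
    rcases hf i with h | h <;> simp [h]
  rw [Finset.sum_congr rfl fun i _ => hsplit i, Finset.sum_add_distrib, ← Finset.mul_sum,
    Finset.sum_boole, Finset.sum_boole, Set.ncard_eq_toFinset_card', Set.ncard_eq_toFinset_card',
    Set.toFinset_ofPred, Set.toFinset_ofPred]
  simp

end OneOrTwo

section MiddleGraphMatching

variable {G : SimpleGraph V} {P : Set (Sym2 (V ⊕ G.edgeSet))}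

theorem IsPerfMatchSet.ncard_setOf_inl_inr [Finite V] (hP : IsPerfMatchSet (middleGraph G) P) :
    {p ∈ P | ∃ (v : V) (e : G.edgeSet), p = s(Sum.inl v, Sum.inr e)}.ncard = Nat.card V := by
  have hset : {p ∈ P | ∃ (v : V) (e : G.edgeSet), p = s(Sum.inl v, Sum.inr e)} =
      {p ∈ P | ∃ w ∈ Set.range Sum.inl, w ∈ p} := by
    ext p
    refine and_congr_right fun hp => ?_
    rcases (mem_edgeSet_middleGraph_iff G).mp (hP.1 hp) with ⟨v, e, -, rfl⟩ | ⟨e, f, -, rfl⟩ <;>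
      simp
  rw [hset, hP.ncard_setOf_exists_mem_of_isIndepSet (isIndepSet_range_inl_middleGraph G),
    Set.ncard_range_of_injective Sum.inl_injective]

theorem ncard_setOf_inr_add_ncard_setOf_inl_inr [Finite V] (hP : P ⊆ (middleGraph G).edgeSet) :
    {p ∈ P | ∀ a ∈ p, ∃ e : G.edgeSet, a = Sum.inr e}.ncard +
      {p ∈ P | ∃ (v : V) (e : G.edgeSet), p = s(Sum.inl v, Sum.inr e)}.ncard = P.ncard := by
  rw [← Set.ncard_union_eq]
  · congr 1
    ext p
    refine ⟨fun hp => hp.elim (·.1) (·.1), fun hp => ?_⟩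
    rcases (mem_edgeSet_middleGraph_iff G).mp (hP hp) with ⟨v, e, -, rfl⟩ | ⟨e, f, -, rfl⟩
    · exact .inr ⟨hp, v, e, rfl⟩
    · exact .inl ⟨hp, by simp⟩
  · rw [Set.disjoint_left]
    rintro _ ⟨-, hinr⟩ ⟨-, v, e, rfl⟩
    simpa using hinr (Sum.inl v) (Sym2.mem_mk_left _ _)

theorem ncard_eq_sum_ncard_setOf_forall_mem_K4set [Fintype V]
    (hP : P ⊆ (middleGraph G).edgeSet) :
    P.ncard = ∑ v, {p ∈ P | ∀ a ∈ p, a ∈ K4set G v}.ncard := by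
  have hunion : P = ⋃ v, {p ∈ P | ∀ a ∈ p, a ∈ K4set G v} := by
    ext p
    simp only [Set.mem_iUnion, Set.mem_ofPred_eq, exists_and_left, iff_self_and]
    exact fun hp => (existsUnique_forall_mem_K4set (hP hp)).exists
  have hdisj : Pairwise fun v w =>
      Disjoint {p ∈ P | ∀ a ∈ p, a ∈ K4set G v} {p ∈ P | ∀ a ∈ p, a ∈ K4set G w} := by
    intro v w hvw
    rw [Set.disjoint_left]
    rintro p ⟨hp, hv⟩ ⟨-, hw⟩
    exact hvw ((existsUnique_forall_mem_K4set (hP hp)).unique hv hw)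
  conv_lhs => rw [hunion]
  rw [Set.ncard_iUnion_of_finite (fun _ => Set.toFinite _) hdisj, finsum_eq_sum_of_fintype]

theorem IsPerfMatchSet.one_le_ncard_setOf_forall_mem_K4set [Finite V]
    (hP : IsPerfMatchSet (middleGraph G) P) (v : V) :
    1 ≤ {p ∈ P | ∀ a ∈ p, a ∈ K4set G v}.ncard := by
  obtain ⟨p, hp, hvp⟩ := hP.2.2 (Sum.inl v)
  refine (Set.ncard_pos (Set.toFinite _)).mpr ⟨p, hp, ?_⟩
  rcases (mem_edgeSet_middleGraph_iff G).mp (hP.1 hp) with ⟨u, e, hue, rfl⟩ | ⟨e, f, -, rfl⟩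
  · obtain rfl : v = u := by simpa using hvp
    simp [hue]
  · simp at hvp

theorem two_mul_ncard_setOf_forall_mem_K4set_le [Fintype V] [DecidableRel G.Adj]
    (hP : P ⊆ (middleGraph G).edgeSet) (hdisj : P.Pairwise fun p q => ∀ a ∈ p, a ∉ q)
    (v : V) : 2 * {p ∈ P | ∀ a ∈ p, a ∈ K4set G v}.ncard ≤ G.degree v + 1 :=
  ncard_K4set (G := G) v ▸ two_mul_ncard_setOf_forall_mem_le hP hdisj (K4set G v)

end MiddleGraphMatching

theorem middle_graph_pm_structure_general {V : Type*} [Fintype V]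
    (G : SimpleGraph V) [DecidableRel G.Adj]
    (hcubic : G.IsRegularOfDegree 3)
    (P : Set (Sym2 (V ⊕ G.edgeSet))) (hP : IsPerfMatchSet (middleGraph G) P) :
    {p ∈ P | ∀ a ∈ p, ∃ e : G.edgeSet, a = Sum.inr e}.ncard = Fintype.card V / 4 ∧
    {p ∈ P | ∃ (v : V) (e : G.edgeSet), p = s(Sum.inl v, Sum.inr e)}.ncard =
      Fintype.card V ∧
    {v : V | {p ∈ P | ∀ a ∈ p, a ∈ K4set G v}.ncard = 2}.ncard =
      Fintype.card V / 4 ∧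
    {v : V | {p ∈ P | ∀ a ∈ p, a ∈ K4set G v}.ncard = 1}.ncard =
      3 * Fintype.card V / 4 := by
  have hverts : 2 * P.ncard = Fintype.card V + Nat.card G.edgeSet := by
    rw [hP.two_mul_ncard, Nat.card_sum, Nat.card_eq_fintype_card]
  have hedges := hcubic.two_mul_card_edgeSet
  have hinl := hP.ncard_setOf_inl_inr
  have hsplit := ncard_setOf_inr_add_ncard_setOf_inl_inr hP.1
  have hK12 : ∀ v, {p ∈ P | ∀ a ∈ p, a ∈ K4set G v}.ncard = 1 ∨
      {p ∈ P | ∀ a ∈ p, a ∈ K4set G v}.ncard = 2 := fun v => by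
    have hlow := hP.one_le_ncard_setOf_forall_mem_K4set v
    have hup := two_mul_ncard_setOf_forall_mem_K4set_le hP.1 hP.2.1 v
    rw [hcubic.degree_eq] at hup
    omega
  have hsum := ncard_eq_sum_ncard_setOf_forall_mem_K4set hP.1
  rw [sum_eq_ncard_setOf_eq_one_add_two_mul hK12] at hsum
  have hcount := ncard_setOf_eq_one_add_ncard_setOf_eq_two hK12
  rw [Nat.card_eq_fintype_card] at hinl
  omega

/-- Let `G` be a connected cubic graph with `n` vertices and an even
number of edges, and `P` a perfect matching of `M(G)`.  Then `P` has exactly `n/4` edges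
joining two `e`-vertices and exactly `n` edges joining a `v`-vertex to an `e`-vertex;
moreover exactly `n/4` of the `K₄`-subgraphs `G_v` contain exactly two edges of `P` and
the remaining `3n/4` contain exactly one edge of `P`. -/
theorem middle_graph_pm_structure {V : Type*} [Fintype V] [DecidableEq V]
    (G : SimpleGraph V) [DecidableRel G.Adj]
    (hconn : G.Connected) (hcubic : G.IsRegularOfDegree 3)
    (heven : Even G.edgeFinset.card)
    (P : Set (Sym2 (V ⊕ G.edgeSet))) (hP : IsPerfMatchSet (middleGraph G) P) :
    {p ∈ P | ∀ a ∈ p, ∃ e : G.edgeSet, a = Sum.inr e}.ncard = Fintype.card V / 4 ∧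
    {p ∈ P | ∃ (v : V) (e : G.edgeSet), p = s(Sum.inl v, Sum.inr e)}.ncard =
      Fintype.card V ∧
    {v : V | {p ∈ P | ∀ a ∈ p, a ∈ K4set G v}.ncard = 2}.ncard =
      Fintype.card V / 4 ∧
    {v : V | {p ∈ P | ∀ a ∈ p, a ∈ K4set G v}.ncard = 1}.ncard =
      3 * Fintype.card V / 4 :=
  middle_graph_pm_structure_general G hcubic P hP
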